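/- Let (A_n)_{n≥1} be a sequence of nonnegative d×d real matrices such that P_n ≠ 0 for every n. Suppose there exist a strictly increasing sequence of positive integers (n_k)_{k≥1} and a matrix P^{(s)} such that P_{n_k}/‖P_{n_k}‖ → P^{(s)} as k → ∞, and: (H1) the infimum of ‖P_n‖/(‖P_{n_k}‖·‖P_{n_k,n}‖) over all k ≥ 1 and all n with n_{k+1} ≤ n < n_{k+2} is positive; (H2) for every subsequential limit R of the sequence k ↦ P_{n_k,n_{k+1}}/‖P_{n_k,n_{k+1}}‖, there are no indices i ≠ i' and j ≠ j' such that R_{i,j}·R_{i',j'} ≠ 0 while R_{i,j'} = R_{i',j} = 0. Then there exists a vector L ∈ ℝ^d such that for every vector c in V_A := {v ∈ ℝ^d : v has nonnegative entries and inf_n ‖P_n v‖/‖P_n‖ > 0} (a set which contains every vector with all entries positive), the sequence n ↦ P_n c/‖P_n c‖ converges to L; in particular the limit does not depend on c. -/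

import Mathlib

/-!
Write `Q k = P_{n_k} / ‖P_{n_k}‖` and `R k = P_{n_k,n_{k+1}} / ‖P_{n_k,n_{k+1}}‖`. Then
`Q k * R k = λ_k • Q (k + 1)` with `λ_k ≥ ε` by (H1), so along a subsequence on which `R k → R`
the limit satisfies `P^{(s)} R = μ P^{(s)}` with `μ ≥ ε`. Every row of `P^{(s)}` is therefore a
nonnegative left eigenvector of `R` for the eigenvalue `μ > 0`, and (H2) forces any two such
eigenvectors to be proportional: subtracting the largest admissible multiple of one from the
other leaves a nonnegative eigenvector vanishing somewhere on the support of the first, which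
(H2) rules out unless it is zero. Hence `P^{(s)} = u vᵀ` with `v ≥ 0`.

For `n_{k+1} ≤ n < n_{k+2}` write `P_n c = ‖P_{n_k}‖ • Q k w` with `w = P_{n_k,n} c ≥ 0`. By (H1)
and `c ∈ V_A`, `‖Q k w‖ ≥ δ ‖w‖` for a fixed `δ > 0`, so the direction of `Q k w` is within
`2 ‖Q k - P^{(s)}‖ / δ` of the direction of `P^{(s)} w = (v ⬝ᵥ w) • u`, which is that of `u`.
-/

open Filter Matrix

/-- `‖X‖`: sum of the absolute values of the entries of a real matrix. -/
noncomputable def matEntrySumNorm {d : ℕ} (M : Matrix (Fin d) (Fin d) ℝ) : ℝ :=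
  ∑ i, ∑ j, |M i j|

/-- `‖v‖`: sum of the absolute values of the entries of a real vector. -/
noncomputable def vecEntrySumNorm {d : ℕ} (v : Fin d → ℝ) : ℝ :=
  ∑ i, |v i|

/-- `P_{m,n} = A_{m+1} ⋯ A_n` (ordered product); `P_{n,n} = I`. -/
def matProd {d : ℕ} (A : ℕ → Matrix (Fin d) (Fin d) ℝ) (m n : ℕ) :
    Matrix (Fin d) (Fin d) ℝ :=
  ((List.range (n - m)).map fun i => A (m + 1 + i)).prod

theorem norm_normalize_sub_normalize_le {E : Type*} [NormedAddCommGroup E] [NormedSpace ℝ E]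
    {a : E} (ha : a ≠ 0) (b : E) :
    ‖NormedSpace.normalize a - NormedSpace.normalize b‖ ≤ 2 * ‖a - b‖ / ‖a‖ := by
  have ha' : 0 < ‖a‖ := norm_pos_iff.2 ha
  have hsplit : NormedSpace.normalize a - NormedSpace.normalize b =
      ‖a‖⁻¹ • (a - b) + (‖a‖⁻¹ * (‖b‖ - ‖a‖)) • NormedSpace.normalize b := by
    have hb := NormedSpace.norm_smul_normalize b
    have hinv : ‖a‖⁻¹ * ‖a‖ = 1 := inv_mul_cancel₀ ha'.ne'
    show ‖a‖⁻¹ • a - _ = _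
    linear_combination (norm := module) hinv • NormedSpace.normalize b - ‖a‖⁻¹ • hb
  have hb : ‖NormedSpace.normalize b‖ ≤ 1 := by
    by_cases hb : b = 0
    · simp [hb]
    · exact (NormedSpace.norm_normalize hb).le
  calc _ ≤ ‖a‖⁻¹ * ‖a - b‖ + ‖a‖⁻¹ * |‖b‖ - ‖a‖| * ‖NormedSpace.normalize b‖ := by
        rw [hsplit]
        refine (norm_add_le _ _).trans_eq ?_
        rw [norm_smul, norm_smul, Real.norm_eq_abs, Real.norm_eq_abs, abs_mul,
          abs_of_pos (inv_pos.2 ha')]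
    _ ≤ ‖a‖⁻¹ * ‖a - b‖ + ‖a‖⁻¹ * ‖a - b‖ * 1 := by
        gcongr
        rw [abs_sub_comm]
        exact abs_norm_sub_norm_le a b
    _ = 2 * ‖a - b‖ / ‖a‖ := by ring

lemma StrictMono.exists_le_lt_succ {f : ℕ → ℕ} (hf : StrictMono f) {m n : ℕ} (hn : f m ≤ n) :
    ∃ k, m ≤ k ∧ f k ≤ n ∧ n < f (k + 1) := by
  classical
  have hmn : m ≤ n := hf.le_apply.trans hn
  refine ⟨Nat.findGreatest (fun k => f k ≤ n) n, Nat.le_findGreatest hmn hn,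
    Nat.findGreatest_spec (P := fun k => f k ≤ n) hmn hn, not_le.1 fun h => ?_⟩
  exact Nat.findGreatest_is_greatest (Nat.lt_succ_self _) (hf.le_apply.trans h) h

lemma isCompact_setOf_forall_apply_mem_Icc {m n : Type*} [Finite m] [Finite n] (a b : ℝ) :
    IsCompact {M : Matrix m n ℝ | ∀ i j, M i j ∈ Set.Icc a b} := by
  have h := isCompact_univ_pi fun _ : m => isCompact_univ_pi fun _ : n => 
    isCompact_Icc (a := a) (b := b)
  simp only [Set.pi, Set.mem_univ, forall_const] at h
  exact h

def HasNoCrossPattern {ι : Type*} (B : Matrix ι ι ℝ) : Prop :=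
  ¬ ∃ i i' : ι, ∃ j j' : ι, i ≠ i' ∧ j ≠ j' ∧ B i j * B i' j' ≠ 0 ∧ B i j' = 0 ∧ B i' j = 0

section LeftEigenvector
variable {ι : Type*} [Fintype ι] {B : Matrix ι ι ℝ} {μ : ℝ}

lemma sum_mul_apply_eq_of_vecMul_eq_smul {r : ι → ℝ} (hre : r ᵥ* B = μ • r) (j : ι) :
    ∑ i, r i * B i j = μ * r j := by
  rw [← vecMul_apply_eq_sum, hre, Pi.smul_apply, smul_eq_mul]

lemma pos_of_vecMul_eq_smul (hB : ∀ i j, 0 ≤ B i j) {r : ι → ℝ} (hr : ∀ i, 0 ≤ r i)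
    (hre : r ᵥ* B = μ • r) {i j : ι} (hri : 0 < r i) (hBij : 0 < B i j) : 0 < r j := by
  have hle : r i * B i j ≤ μ * r j := by
    rw [← sum_mul_apply_eq_of_vecMul_eq_smul hre]
    exact Finset.single_le_sum (f := fun i => r i * B i j)
      (fun i _ => mul_nonneg (hr i) (hB i j)) (Finset.mem_univ i)
  refine (hr j).lt_of_ne fun h => ?_
  rw [← h, mul_zero] at hle
  exact (mul_pos hri hBij).not_ge hle

lemma exists_pos_of_vecMul_eq_smul (hμ : 0 < μ) {r : ι → ℝ} (hr : ∀ i, 0 ≤ r i)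
    (hre : r ᵥ* B = μ • r) {j : ι} (hrj : 0 < r j) : ∃ i, 0 < r i ∧ 0 < B i j := by
  have hsum : ∑ _i : ι, (0 : ℝ) < ∑ i, r i * B i j := by
    rw [sum_mul_apply_eq_of_vecMul_eq_smul hre, Finset.sum_const_zero]
    exact mul_pos hμ hrj
  obtain ⟨i, -, hi⟩ := Finset.exists_lt_of_sum_lt hsum
  exact ⟨i, (pos_and_pos_or_neg_and_neg_of_mul_pos hi).resolve_right fun h => (hr i).not_gt h.1⟩

lemma exists_div_mul_le {p q : ι → ℝ} (hp : ∀ i, 0 ≤ p i) (hp0 : p ≠ 0) (hq : ∀ i, 0 ≤ q i) :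
    ∃ j, 0 < p j ∧ ∀ i, q j / p j * p i ≤ q i := by
  have hne : (Finset.univ.filter fun j => 0 < p j).Nonempty := by
    by_contra h
    exact hp0 (funext fun i => le_antisymm
      (not_lt.1 fun hi => h ⟨i, Finset.mem_filter.2 ⟨Finset.mem_univ i, hi⟩⟩) (hp i))
  obtain ⟨j, hj, hmin⟩ := Finset.exists_min_image _ (fun j => q j / p j) hne
  refine ⟨j, (Finset.mem_filter.1 hj).2, fun i => ?_⟩
  rcases (hp i).eq_or_lt with h | h
  · rw [← h, mul_zero]
    exact hq i
  · exact (le_div_iff₀ h).1 (hmin i (Finset.mem_filter.2 ⟨Finset.mem_univ i, h⟩))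

namespace HasNoCrossPattern

lemma apply_pos_of_vecMul_eq_smul (hcross : HasNoCrossPattern B) (hB : ∀ i j, 0 ≤ B i j)
    (hμ : 0 < μ) {r : ι → ℝ} (hr : ∀ i, 0 ≤ r i) (hre : r ᵥ* B = μ • r) {i₁ j₁ : ι}
    (hri₁ : r i₁ = 0) (hrj₁ : r j₁ = 0) (hBij₁ : 0 < B i₁ j₁) {j : ι} (hrj : 0 < r j) :
    0 < B i₁ j := by
  obtain ⟨i, hri, hBij⟩ := exists_pos_of_vecMul_eq_smul hμ hr hre hrj
  have hBij₁' : B i j₁ = 0 := by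
    by_contra h
    exact (pos_of_vecMul_eq_smul hB hr hre hri ((hB i j₁).lt_of_ne' h)).ne' hrj₁
  refine (hB i₁ j).lt_of_ne' fun hBi₁j =>
    hcross ⟨i, i₁, j, j₁, ?_, ?_, (mul_pos hBij hBij₁).ne', hBij₁', hBi₁j⟩
  · rintro rfl
    exact hri.ne' hri₁
  · rintro rfl
    exact hrj.ne' hrj₁

lemma pos_of_pos_of_vecMul_eq_smul (hcross : HasNoCrossPattern B) (hB : ∀ i j, 0 ≤ B i j)
    (hμ : 0 < μ) {r s : ι → ℝ} (hr : ∀ i, 0 ≤ r i) (hr0 : r ≠ 0) (hs : ∀ i, 0 ≤ s i)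
    (hre : r ᵥ* B = μ • r) (hse : s ᵥ* B = μ • s) {j₁ : ι} (hsj₁ : 0 < s j₁) : 0 < r j₁ := by
  refine (hr j₁).lt_of_ne' fun hrj₁ => ?_
  obtain ⟨i₁, hsi₁, hBij₁⟩ := exists_pos_of_vecMul_eq_smul hμ hs hse hsj₁
  have hri₁ : r i₁ = 0 := by
    by_contra h
    exact (pos_of_vecMul_eq_smul hB hr hre ((hr i₁).lt_of_ne' h) hBij₁).ne' hrj₁
  obtain ⟨j, hrj, hle⟩ := exists_div_mul_le hr hr0 hs
  -- `(s j / r j) • r ≤ s`, with `r i₁ = 0 < s i₁` and `0 < B i₁ j`: pairing both sides with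
  -- column `j` of `B` gives `μ * s j < μ * s j`.
  have hlt : ∑ i, s j / r j * r i * B i j < ∑ i, s i * B i j := by
    refine Finset.sum_lt_sum (fun i _ => mul_le_mul_of_nonneg_right (hle i) (hB i j))
      ⟨i₁, Finset.mem_univ _, ?_⟩
    rw [hri₁, mul_zero, zero_mul]
    exact mul_pos hsi₁ (hcross.apply_pos_of_vecMul_eq_smul hB hμ hr hre hri₁ hrj₁ hBij₁ hrj)
  simp_rw [mul_assoc, ← Finset.mul_sum, sum_mul_apply_eq_of_vecMul_eq_smul hre,
    sum_mul_apply_eq_of_vecMul_eq_smul hse] at hlt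
  field_simp at hlt
  exact lt_irrefl _ hlt

lemma exists_eq_smul_of_vecMul_eq_smul (hcross : HasNoCrossPattern B) (hB : ∀ i j, 0 ≤ B i j)
    (hμ : 0 < μ) {p q : ι → ℝ} (hp : ∀ i, 0 ≤ p i) (hp0 : p ≠ 0) (hq : ∀ i, 0 ≤ q i)
    (hpe : p ᵥ* B = μ • p) (hqe : q ᵥ* B = μ • q) : ∃ t : ℝ, q = t • p := by
  obtain ⟨j, hpj, hle⟩ := exists_div_mul_le hp hp0 hq
  refine ⟨q j / p j, by_contra fun hne => ?_⟩
  have hre : (q - (q j / p j) • p) ᵥ* B = μ • (q - (q j / p j) • p) := by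
    rw [sub_vecMul, smul_vecMul, hpe, hqe, smul_sub, smul_comm μ]
  have hrj : (q - (q j / p j) • p) j = 0 := by
    simp [div_mul_cancel₀ _ hpj.ne']
  exact hrj.not_gt (hcross.pos_of_pos_of_vecMul_eq_smul hB hμ (fun i => sub_nonneg.2 (hle i))
    (sub_ne_zero.2 hne) hp hre hpe hpj)

theorem exists_eq_vecMulVec_of_mul_eq_smul (hcross : HasNoCrossPattern B)
    (hB : ∀ i j, 0 ≤ B i j) (hμ : 0 < μ) {P : Matrix ι ι ℝ} (hP : ∀ i j, 0 ≤ P i j)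
    (hPB : P * B = μ • P) : ∃ u v : ι → ℝ, (∀ j, 0 ≤ v j) ∧ P = vecMulVec u v := by
  by_cases h : ∀ i, P i = 0
  · exact ⟨0, 0, fun _ => le_rfl, Matrix.ext fun i j => by simp [h i]⟩
  obtain ⟨i₀, hi₀⟩ := not_forall.1 h
  have heig : ∀ i, P i ᵥ* B = μ • P i := fun i => by rw [← mul_apply_eq_vecMul, hPB]; rfl
  choose t ht using fun i =>
    hcross.exists_eq_smul_of_vecMul_eq_smul hB hμ (hP i₀) hi₀ (hP i) (heig i₀) (heig i)
  exact ⟨t, P i₀, hP i₀, Matrix.ext fun i j => by rw [ht i]; rfl⟩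

end HasNoCrossPattern

end LeftEigenvector

section EntrySumNorm
variable {d : ℕ}

lemma vecEntrySumNorm_eq_norm_toLp (v : Fin d → ℝ) : vecEntrySumNorm v = ‖WithLp.toLp 1 v‖ := by
  simp [vecEntrySumNorm, PiLp.norm_eq_of_L1]

lemma vecEntrySumNorm_nonneg (v : Fin d → ℝ) : 0 ≤ vecEntrySumNorm v := by
  rw [vecEntrySumNorm_eq_norm_toLp]; exact norm_nonneg _

lemma vecEntrySumNorm_pos_iff {v : Fin d → ℝ} : 0 < vecEntrySumNorm v ↔ v ≠ 0 := by
  rw [vecEntrySumNorm_eq_norm_toLp, norm_pos_iff, ne_eq, WithLp.toLp_eq_zero]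

lemma vecEntrySumNorm_smul (r : ℝ) (v : Fin d → ℝ) :
    vecEntrySumNorm (r • v) = |r| * vecEntrySumNorm v := by
  rw [vecEntrySumNorm_eq_norm_toLp, vecEntrySumNorm_eq_norm_toLp, WithLp.toLp_smul, norm_smul,
    Real.norm_eq_abs]

lemma dist_le_vecEntrySumNorm_sub (v w : Fin d → ℝ) : dist v w ≤ vecEntrySumNorm (v - w) :=
  (dist_pi_le_iff (vecEntrySumNorm_nonneg _)).2 fun i => by
    rw [Real.dist_eq]
    exact Finset.single_le_sum (f := fun i => |(v - w) i|) (fun i _ => abs_nonneg _)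
      (Finset.mem_univ i)

noncomputable def vecNormalize (v : Fin d → ℝ) : Fin d → ℝ := (vecEntrySumNorm v)⁻¹ • v

lemma toLp_vecNormalize (v : Fin d → ℝ) :
    WithLp.toLp 1 (vecNormalize v) = NormedSpace.normalize (WithLp.toLp 1 v) := by
  rw [vecNormalize, vecEntrySumNorm_eq_norm_toLp, WithLp.toLp_smul]
  rfl

lemma vecNormalize_smul_of_pos {r : ℝ} (hr : 0 < r) (v : Fin d → ℝ) :
    vecNormalize (r • v) = vecNormalize v :=
  WithLp.toLp_injective 1 <| by
    rw [toLp_vecNormalize, toLp_vecNormalize, WithLp.toLp_smul,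
      NormedSpace.normalize_smul_of_pos hr]

lemma vecEntrySumNorm_vecNormalize_sub_le {v : Fin d → ℝ} (hv : v ≠ 0) (w : Fin d → ℝ) :
    vecEntrySumNorm (vecNormalize v - vecNormalize w) ≤
      2 * vecEntrySumNorm (v - w) / vecEntrySumNorm v := by
  simpa only [vecEntrySumNorm_eq_norm_toLp, WithLp.toLp_sub, toLp_vecNormalize] using
    norm_normalize_sub_normalize_le ((WithLp.toLp_eq_zero 1).not.2 hv) (WithLp.toLp 1 w)

lemma matEntrySumNorm_nonneg (M : Matrix (Fin d) (Fin d) ℝ) : 0 ≤ matEntrySumNorm M :=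
  Finset.sum_nonneg fun _ _ => Finset.sum_nonneg fun _ _ => abs_nonneg _

lemma abs_le_matEntrySumNorm (M : Matrix (Fin d) (Fin d) ℝ) (i j : Fin d) :
    |M i j| ≤ matEntrySumNorm M :=
  calc |M i j| ≤ ∑ j, |M i j| :=
        Finset.single_le_sum (f := fun j => |M i j|) (fun _ _ => abs_nonneg _)
          (Finset.mem_univ j)
    _ ≤ matEntrySumNorm M :=
        Finset.single_le_sum (f := fun i => ∑ j, |M i j|)
          (fun _ _ => Finset.sum_nonneg fun _ _ => abs_nonneg _) (Finset.mem_univ i)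

lemma matEntrySumNorm_pos {M : Matrix (Fin d) (Fin d) ℝ} (hM : M ≠ 0) :
    0 < matEntrySumNorm M := by
  obtain ⟨i, j, hij⟩ : ∃ i j, M i j ≠ 0 := by
    by_contra! h
    exact hM (Matrix.ext h)
  exact (abs_pos.2 hij).trans_le (abs_le_matEntrySumNorm M i j)

lemma matEntrySumNorm_smul (r : ℝ) (M : Matrix (Fin d) (Fin d) ℝ) :
    matEntrySumNorm (r • M) = |r| * matEntrySumNorm M := by
  simp only [matEntrySumNorm, Matrix.smul_apply, smul_eq_mul, abs_mul, Finset.mul_sum]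

lemma continuous_matEntrySumNorm : Continuous (matEntrySumNorm (d := d)) := by
  unfold matEntrySumNorm
  fun_prop

lemma vecEntrySumNorm_mulVec_le (M : Matrix (Fin d) (Fin d) ℝ) (v : Fin d → ℝ) :
    vecEntrySumNorm (M *ᵥ v) ≤ matEntrySumNorm M * vecEntrySumNorm v := by
  simp only [vecEntrySumNorm, matEntrySumNorm, mulVec, dotProduct, Finset.sum_mul]
  refine Finset.sum_le_sum fun i _ => (Finset.abs_sum_le_sum_abs _ _).trans <|
    Finset.sum_le_sum fun j _ => ?_
  rw [abs_mul]
  exact mul_le_mul_of_nonneg_left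
    (Finset.single_le_sum (f := fun j => |v j|) (fun _ _ => abs_nonneg _) (Finset.mem_univ j))
    (abs_nonneg _)

lemma mul_matEntrySumNorm_le_vecEntrySumNorm_mulVec {M : Matrix (Fin d) (Fin d) ℝ}
    (hM : ∀ i j, 0 ≤ M i j) {v : Fin d → ℝ} {m : ℝ} (hv : ∀ j, m ≤ v j) :
    m * matEntrySumNorm M ≤ vecEntrySumNorm (M *ᵥ v) := by
  simp only [vecEntrySumNorm, matEntrySumNorm, mulVec, dotProduct, Finset.mul_sum]
  refine Finset.sum_le_sum fun i _ => le_trans ?_ (le_abs_self _)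
  exact Finset.sum_le_sum fun j _ => by
    rw [abs_of_nonneg (hM i j), mul_comm]
    exact mul_le_mul_of_nonneg_left (hv j) (hM i j)

lemma mulVec_nonneg {M : Matrix (Fin d) (Fin d) ℝ} (hM : ∀ i j, 0 ≤ M i j) {v : Fin d → ℝ}
    (hv : ∀ j, 0 ≤ v j) (i : Fin d) : 0 ≤ (M *ᵥ v) i :=
  dotProduct_nonneg_of_nonneg (hM i) hv

noncomputable def matNormalize (M : Matrix (Fin d) (Fin d) ℝ) : Matrix (Fin d) (Fin d) ℝ :=
  (matEntrySumNorm M)⁻¹ • M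

lemma matEntrySumNorm_matNormalize {M : Matrix (Fin d) (Fin d) ℝ} (hM : M ≠ 0) :
    matEntrySumNorm (matNormalize M) = 1 := by
  rw [matNormalize, matEntrySumNorm_smul, abs_inv, abs_of_nonneg (matEntrySumNorm_nonneg M),
    inv_mul_cancel₀ (matEntrySumNorm_pos hM).ne']

lemma matNormalize_mul_matNormalize (M N : Matrix (Fin d) (Fin d) ℝ) :
    matNormalize M * matNormalize N =
      (matEntrySumNorm (M * N) / (matEntrySumNorm M * matEntrySumNorm N)) •
        matNormalize (M * N) := by
  rw [matNormalize, matNormalize, matNormalize, smul_mul_smul_comm, smul_smul]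
  by_cases hMN : M * N = 0
  · simp [hMN]
  · congr 1
    field_simp [(matEntrySumNorm_pos hMN).ne']

lemma matNormalize_apply_mem_Icc {M : Matrix (Fin d) (Fin d) ℝ} (hM : ∀ i j, 0 ≤ M i j)
    (i j : Fin d) : matNormalize M i j ∈ Set.Icc 0 1 := by
  have hle : M i j ≤ matEntrySumNorm M := (le_abs_self _).trans (abs_le_matEntrySumNorm M i j)
  exact ⟨mul_nonneg (inv_nonneg.2 (matEntrySumNorm_nonneg M)) (hM i j),
    inv_mul_le_one_of_le₀ hle (matEntrySumNorm_nonneg M)⟩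

end EntrySumNorm

section MatProd
variable {d : ℕ}

lemma matProd_mul (A : ℕ → Matrix (Fin d) (Fin d) ℝ) {a b c : ℕ} (hab : a ≤ b) (hbc : b ≤ c) :
    matProd A a b * matProd A b c = matProd A a c := by
  unfold matProd
  rw [← List.prod_append, show c - a = (b - a) + (c - b) by omega, List.range_add,
    List.map_append, List.map_map]
  congr 2
  exact List.map_congr_left fun x _ => by simp only [Function.comp_apply]; congr 1; omega

lemma matProd_nonneg {A : ℕ → Matrix (Fin d) (Fin d) ℝ} (hA : ∀ n i j, 0 ≤ A n i j) (m n : ℕ) :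
    ∀ i j, 0 ≤ matProd A m n i j :=
  List.prod_induction (fun M : Matrix (Fin d) (Fin d) ℝ => ∀ i j, 0 ≤ M i j)
    (fun _ _ hM hN i j => by
      rw [mul_apply]
      exact Finset.sum_nonneg fun k _ => mul_nonneg (hM i k) (hN k j))
    (fun i j => by by_cases h : i = j <;> simp [one_apply, h])
    (by simpa using fun k _ => hA _)

end MatProd

section Limits
variable {d : ℕ}

theorem exists_pos_mul_eq_smul_of_tendsto {Q R : ℕ → Matrix (Fin d) (Fin d) ℝ} {a : ℕ → ℝ}
    {P R' : Matrix (Fin d) (Fin d) ℝ} {φ : ℕ → ℕ} {ε : ℝ} (hε : 0 < ε)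
    (hQ : Tendsto Q atTop (nhds P)) (hQ1 : ∀ k, matEntrySumNorm (Q k) = 1)
    (hrel : ∀ k, Q k * R k = a k • Q (k + 1)) (ha : ∀ k, ε ≤ a k)
    (hφ : StrictMono φ) (hR : Tendsto (R ∘ φ) atTop (nhds R')) :
    ∃ μ > (0 : ℝ), P * R' = μ • P := by
  have hQR : Tendsto (fun k => Q (φ k) * R (φ k)) atTop (nhds (P * R')) :=
    (hQ.comp hφ.tendsto_atTop).mul hR
  have ha_eq : ∀ k, matEntrySumNorm (Q k * R k) = a k := fun k => by
    rw [hrel, matEntrySumNorm_smul, hQ1, mul_one, abs_of_pos (hε.trans_le (ha k))]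
  have haφ : Tendsto (fun k => a (φ k)) atTop (nhds (matEntrySumNorm (P * R'))) :=
    ((continuous_matEntrySumNorm.tendsto _).comp hQR).congr fun k => ha_eq (φ k)
  refine ⟨matEntrySumNorm (P * R'), hε.trans_le (ge_of_tendsto' haφ fun k => ha (φ k)),
    tendsto_nhds_unique hQR ?_⟩
  have hQφ : Tendsto (fun k => Q (φ k + 1)) atTop (nhds P) :=
    hQ.comp ((tendsto_add_atTop_nat 1).comp hφ.tendsto_atTop)
  simpa only [hrel] using haφ.smul hQφ

theorem vecEntrySumNorm_vecNormalize_mulVec_sub_le {M : Matrix (Fin d) (Fin d) ℝ}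
    {u v w : Fin d → ℝ} (hv : ∀ j, 0 ≤ v j) (hw : ∀ j, 0 ≤ w j) (hw0 : w ≠ 0) {δ : ℝ}
    (hMw : δ * vecEntrySumNorm w ≤ vecEntrySumNorm (M *ᵥ w))
    (hM : matEntrySumNorm (M - vecMulVec u v) < δ) :
    vecEntrySumNorm (vecNormalize (M *ᵥ w) - vecNormalize u) ≤
      2 * matEntrySumNorm (M - vecMulVec u v) / δ := by
  set E := matEntrySumNorm (M - vecMulVec u v)
  have hE : 0 ≤ E := matEntrySumNorm_nonneg _
  have hw' : 0 < vecEntrySumNorm w := vecEntrySumNorm_pos_iff.2 hw0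
  have hδ : 0 < δ := hE.trans_lt hM
  have hdiff : vecEntrySumNorm (M *ᵥ w - (v ⬝ᵥ w) • u) ≤ E * vecEntrySumNorm w := by
    rw [← op_smul_eq_smul, ← vecMulVec_mulVec, ← sub_mulVec]
    exact vecEntrySumNorm_mulVec_le _ _
  have hMw0 : 0 < vecEntrySumNorm (M *ᵥ w) := (mul_pos hδ hw').trans_le hMw
  have hvw : 0 < v ⬝ᵥ w := by
    refine (dotProduct_nonneg_of_nonneg hv hw).lt_of_ne' fun h => ?_
    rw [h, zero_smul, sub_zero] at hdiff
    exact (mul_lt_mul_of_pos_right hM hw').not_ge (hMw.trans hdiff)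
  calc _ = vecEntrySumNorm (vecNormalize (M *ᵥ w) - vecNormalize ((v ⬝ᵥ w) • u)) := by
        rw [vecNormalize_smul_of_pos hvw]
    _ ≤ 2 * vecEntrySumNorm (M *ᵥ w - (v ⬝ᵥ w) • u) / vecEntrySumNorm (M *ᵥ w) :=
        vecEntrySumNorm_vecNormalize_sub_le (vecEntrySumNorm_pos_iff.1 hMw0) _
    _ ≤ 2 * (E * vecEntrySumNorm w) / (δ * vecEntrySumNorm w) :=
        div_le_div₀ (by positivity) (by linarith) (by positivity) hMw
    _ = 2 * E / δ := by field_simp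

lemma div_mul_vecEntrySumNorm_le_vecEntrySumNorm_matNormalize_mulVec
    {M N : Matrix (Fin d) (Fin d) ℝ} {c : Fin d → ℝ} {ε εc : ℝ} (hε : 0 < ε) (hεc : 0 ≤ εc)
    (hc : 0 < vecEntrySumNorm c)
    (hMN : ε ≤ matEntrySumNorm (M * N) / (matEntrySumNorm M * matEntrySumNorm N))
    (hMNc : εc ≤ vecEntrySumNorm ((M * N) *ᵥ c) / matEntrySumNorm (M * N)) :
    εc * ε / vecEntrySumNorm c * vecEntrySumNorm (N *ᵥ c) ≤
      vecEntrySumNorm (matNormalize M *ᵥ (N *ᵥ c)) := by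
  have hMN0 : 0 < matEntrySumNorm M * matEntrySumNorm N := by
    refine (mul_nonneg (matEntrySumNorm_nonneg M) (matEntrySumNorm_nonneg N)).lt_of_ne' fun h => ?_
    rw [h, div_zero] at hMN
    exact hε.not_ge hMN
  have hM : 0 < matEntrySumNorm M :=
    (matEntrySumNorm_nonneg M).lt_of_ne' fun h => by simp [h] at hMN0
  have h₁ : ε * (matEntrySumNorm M * matEntrySumNorm N) ≤ matEntrySumNorm (M * N) :=
    (le_div_iff₀ hMN0).1 hMN
  have h₂ : εc * matEntrySumNorm (M * N) ≤ vecEntrySumNorm ((M * N) *ᵥ c) :=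
    (le_div_iff₀ ((mul_pos hε hMN0).trans_le h₁)).1 hMNc
  rw [matNormalize, smul_mulVec, vecEntrySumNorm_smul, mulVec_mulVec, abs_inv, abs_of_pos hM]
  calc εc * ε / vecEntrySumNorm c * vecEntrySumNorm (N *ᵥ c)
      ≤ εc * ε / vecEntrySumNorm c * (matEntrySumNorm N * vecEntrySumNorm c) := by
        gcongr
        exact vecEntrySumNorm_mulVec_le N c
    _ = (matEntrySumNorm M)⁻¹ * (εc * (ε * (matEntrySumNorm M * matEntrySumNorm N))) := by
        field_simp
    _ ≤ (matEntrySumNorm M)⁻¹ * vecEntrySumNorm ((M * N) *ᵥ c) := by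
        gcongr
        exact (mul_le_mul_of_nonneg_left h₁ hεc).trans h₂

end Limits

section Products
variable {d : ℕ} {A : ℕ → Matrix (Fin d) (Fin d) ℝ} {nk : ℕ → ℕ}

theorem exists_pos_le_vecEntrySumNorm_mulVec_div (hA : ∀ n i j, 0 ≤ A n i j)
    (hP : ∀ n, matProd A 0 n ≠ 0) {v : Fin d → ℝ} (hv : ∀ i, 0 < v i) :
    ∃ ε > (0 : ℝ), ∀ n,
      ε ≤ vecEntrySumNorm (matProd A 0 n *ᵥ v) / matEntrySumNorm (matProd A 0 n) := by
  obtain ⟨m, hm, hmv⟩ : ∃ m > (0 : ℝ), ∀ i, m ≤ v i := by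
    rcases isEmpty_or_nonempty (Fin d) with _ | _
    · exact ⟨1, one_pos, isEmptyElim⟩
    · obtain ⟨i₀, hi₀⟩ := Finite.exists_min v
      exact ⟨v i₀, hv i₀, hi₀⟩
  exact ⟨m, hm, fun n => (le_div_iff₀ (matEntrySumNorm_pos (hP n))).2
    (mul_matEntrySumNorm_le_vecEntrySumNorm_mulVec (matProd_nonneg hA 0 n) hmv)⟩

theorem exists_eq_vecMulVec_of_tendsto_matNormalize (hA : ∀ n i j, 0 ≤ A n i j)
    (hP : ∀ n, matProd A 0 n ≠ 0) (hnk : StrictMono nk) {Ps : Matrix (Fin d) (Fin d) ℝ}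
    (hPs : Tendsto (fun k => matNormalize (matProd A 0 (nk k))) atTop (nhds Ps))
    {ε : ℝ} (hε : 0 < ε) (hgap : ∀ k, ε ≤ matEntrySumNorm (matProd A 0 (nk (k + 1))) /
      (matEntrySumNorm (matProd A 0 (nk k)) * matEntrySumNorm (matProd A (nk k) (nk (k + 1)))))
    (H2 : ∀ R : Matrix (Fin d) (Fin d) ℝ, (∃ φ : ℕ → ℕ, StrictMono φ ∧
      Tendsto (fun k => matNormalize (matProd A (nk (φ k)) (nk (φ k + 1)))) atTop (nhds R)) →
      HasNoCrossPattern R) :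
    ∃ u v : Fin d → ℝ, (∀ j, 0 ≤ v j) ∧ Ps = vecMulVec u v := by
  -- instance search does not see through `Matrix` to the product topology
  have : FirstCountableTopology (Matrix (Fin d) (Fin d) ℝ) :=
    inferInstanceAs (FirstCountableTopology (Fin d → Fin d → ℝ))
  have hbox := isCompact_setOf_forall_apply_mem_Icc (m := Fin d) (n := Fin d) 0 1
  obtain ⟨R, hR, φ, hφ, hRφ⟩ := hbox.tendsto_subseq fun k =>
    matNormalize_apply_mem_Icc (matProd_nonneg hA (nk k) (nk (k + 1)))
  have hPs_mem : Ps ∈ _ := hbox.isClosed.mem_of_tendsto hPs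
    (Eventually.of_forall fun k => matNormalize_apply_mem_Icc (matProd_nonneg hA 0 (nk k)))
  have hrel : ∀ k, matNormalize (matProd A 0 (nk k)) * matNormalize (matProd A (nk k) (nk (k + 1)))
      = _ • matNormalize (matProd A 0 (nk (k + 1))) := fun k => by
    rw [matNormalize_mul_matNormalize, matProd_mul A (Nat.zero_le _) (hnk k.lt_succ_self).le]
  obtain ⟨μ, hμ, hPsR⟩ := exists_pos_mul_eq_smul_of_tendsto hε hPs
    (fun k => matEntrySumNorm_matNormalize (hP _)) hrel hgap hφ hRφ
  exact (H2 R ⟨φ, hφ, hRφ⟩).exists_eq_vecMulVec_of_mul_eq_smul (fun i j => (hR i j).1) hμ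
    (fun i j => (hPs_mem i j).1) hPsR

theorem tendsto_vecNormalize_matProd_mulVec (hA : ∀ n i j, 0 ≤ A n i j)
    (hP : ∀ n, matProd A 0 n ≠ 0) (hnk : StrictMono nk) {ε : ℝ} (hε : 0 < ε)
    (hH1 : ∀ k n, nk (k + 1) ≤ n → n < nk (k + 2) →
      ε ≤ matEntrySumNorm (matProd A 0 n) /
        (matEntrySumNorm (matProd A 0 (nk k)) * matEntrySumNorm (matProd A (nk k) n)))
    {u v : Fin d → ℝ} (hv : ∀ j, 0 ≤ v j)
    (hPs : Tendsto (fun k => matNormalize (matProd A 0 (nk k))) atTop (nhds (vecMulVec u v)))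
    {c : Fin d → ℝ} (hc : ∀ i, 0 ≤ c i) {εc : ℝ} (hεc : 0 < εc)
    (hcb : ∀ n, εc ≤ vecEntrySumNorm (matProd A 0 n *ᵥ c) / matEntrySumNorm (matProd A 0 n)) :
    Tendsto (fun n => vecNormalize (matProd A 0 n *ᵥ c)) atTop (nhds (vecNormalize u)) := by
  set D := fun k => matEntrySumNorm (matNormalize (matProd A 0 (nk k)) - vecMulVec u v)
  have hPc : ∀ n, matProd A 0 n *ᵥ c ≠ 0 := fun n => vecEntrySumNorm_pos_iff.1 <|
    (div_pos_iff_of_pos_right (matEntrySumNorm_pos (hP n))).1 (hεc.trans_le (hcb n))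
  have hc0 : 0 < vecEntrySumNorm c :=
    vecEntrySumNorm_pos_iff.2 fun h => hPc 0 (by rw [h, mulVec_zero])
  set δ := εc * ε / vecEntrySumNorm c
  have hδ : 0 < δ := by positivity
  have hblock : ∀ k n, nk (k + 1) ≤ n → n < nk (k + 2) → D k < δ →
      vecEntrySumNorm (vecNormalize (matProd A 0 n *ᵥ c) - vecNormalize u) ≤ 2 * D k / δ := by
    intro k n hn₁ hn₂ hDk
    have hsplit := matProd_mul A (Nat.zero_le (nk k)) ((hnk.monotone k.le_succ).trans hn₁)
    have hPnc : matProd A 0 n *ᵥ c = matEntrySumNorm (matProd A 0 (nk k)) •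
        (matNormalize (matProd A 0 (nk k)) *ᵥ (matProd A (nk k) n *ᵥ c)) := by
      rw [matNormalize, smul_mulVec, smul_smul, mul_inv_cancel₀ (matEntrySumNorm_pos (hP _)).ne',
        one_smul, mulVec_mulVec, hsplit]
    rw [hPnc, vecNormalize_smul_of_pos (matEntrySumNorm_pos (hP _))]
    refine vecEntrySumNorm_vecNormalize_mulVec_sub_le hv (mulVec_nonneg (matProd_nonneg hA _ _) hc)
      (fun h => hPc n (by rw [hPnc, h, mulVec_zero, smul_zero])) ?_ hDk
    exact div_mul_vecEntrySumNorm_le_vecEntrySumNorm_matNormalize_mulVec hε hεc.le hc0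
      (hsplit ▸ hH1 k n hn₁ hn₂) (hsplit ▸ hcb n)
  have hD : Tendsto D atTop (nhds 0) := by
    simpa [D, matEntrySumNorm, Function.comp_def] using
      (continuous_matEntrySumNorm.tendsto _).comp (hPs.sub_const (vecMulVec u v))
  rw [Metric.tendsto_atTop]
  intro η hη
  obtain ⟨k₀, hk₀⟩ := eventually_atTop.1 ((hD.eventually (gt_mem_nhds hδ)).and
    (hD.eventually (gt_mem_nhds (half_pos (mul_pos hη hδ)))))
  refine ⟨nk (k₀ + 1), fun n hn => ?_⟩
  obtain ⟨k', hk', hn₁, hn₂⟩ := hnk.exists_le_lt_succ hn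
  obtain ⟨k, rfl⟩ : ∃ k, k' = k + 1 := ⟨k' - 1, by omega⟩
  obtain ⟨hDδ, hDη⟩ := hk₀ k (by omega)
  calc dist _ _ ≤ _ := dist_le_vecEntrySumNorm_sub _ _
    _ ≤ 2 * D k / δ := hblock k n hn₁ hn₂ hDδ
    _ < η := by rw [div_lt_iff₀ hδ]; linarith

end Products

theorem normalized_image_converges_of_H1_H2_general {d : ℕ}
    (A : ℕ → Matrix (Fin d) (Fin d) ℝ)
    (hA : ∀ n i j, 0 ≤ A n i j)
    (hP : ∀ n, matProd A 0 n ≠ 0)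
    (nk : ℕ → ℕ) (hnk : StrictMono nk)
    (Ps : Matrix (Fin d) (Fin d) ℝ)
    (hPs : Tendsto (fun k => (matEntrySumNorm (matProd A 0 (nk k)))⁻¹ • matProd A 0 (nk k))
      atTop (nhds Ps))
    (H1 : ∃ ε > (0 : ℝ), ∀ k n, nk (k + 1) ≤ n → n < nk (k + 2) →
      ε ≤ matEntrySumNorm (matProd A 0 n) /
        (matEntrySumNorm (matProd A 0 (nk k)) * matEntrySumNorm (matProd A (nk k) n)))
    (H2 : ∀ R : Matrix (Fin d) (Fin d) ℝ,
      (∃ φ : ℕ → ℕ, StrictMono φ ∧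
        Tendsto (fun k => (matEntrySumNorm (matProd A (nk (φ k)) (nk (φ k + 1))))⁻¹ •
          matProd A (nk (φ k)) (nk (φ k + 1))) atTop (nhds R)) →
      ¬ ∃ i i' : Fin d, ∃ j j' : Fin d, i ≠ i' ∧ j ≠ j' ∧
        R i j * R i' j' ≠ 0 ∧ R i j' = 0 ∧ R i' j = 0) :
    (∀ v : Fin d → ℝ, (∀ i, 0 < v i) →
      ∃ ε > (0 : ℝ), ∀ n,
        ε ≤ vecEntrySumNorm (matProd A 0 n *ᵥ v) / matEntrySumNorm (matProd A 0 n)) ∧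
    ∃ L : Fin d → ℝ, ∀ c : Fin d → ℝ, (∀ i, 0 ≤ c i) →
      (∃ ε > (0 : ℝ), ∀ n,
        ε ≤ vecEntrySumNorm (matProd A 0 n *ᵥ c) / matEntrySumNorm (matProd A 0 n)) →
      Tendsto (fun n => (vecEntrySumNorm (matProd A 0 n *ᵥ c))⁻¹ • (matProd A 0 n *ᵥ c))
        atTop (nhds L) := by
  obtain ⟨ε, hε, hH1⟩ := H1
  refine ⟨fun v hv => exists_pos_le_vecEntrySumNorm_mulVec_div hA hP hv, ?_⟩
  obtain ⟨u, v, hv, rfl⟩ := exists_eq_vecMulVec_of_tendsto_matNormalize hA hP hnk hPs hε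
    (fun k => hH1 k _ le_rfl (hnk (k + 1).lt_succ_self)) H2
  exact ⟨vecNormalize u, fun c hc ⟨εc, hεc, hcb⟩ =>
    tendsto_vecNormalize_matProd_mulVec hA hP hnk hε hH1 hv hPs hc hεc hcb⟩

/-- Theorem 1.5: under hypotheses (H1) and (H2) on a convergent
subsequence of the normalized left-products of nonnegative matrices, the sequence
`n ↦ P_n c / ‖P_n c‖` converges, for every `c` in `V_A` (a set containing all positive
vectors), to a limit `L` not depending on `c`. -/
theorem normalized_image_converges_of_H1_H2 {d : ℕ}
    (A : ℕ → Matrix (Fin d) (Fin d) ℝ)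
    (hA : ∀ n i j, 0 ≤ A n i j)
    (hP : ∀ n, matProd A 0 n ≠ 0)
    (nk : ℕ → ℕ) (hnk : StrictMono nk) (hnk0 : 0 < nk 0)
    (Ps : Matrix (Fin d) (Fin d) ℝ)
    (hPs : Tendsto (fun k => (matEntrySumNorm (matProd A 0 (nk k)))⁻¹ • matProd A 0 (nk k))
      atTop (nhds Ps))
    (H1 : ∃ ε > (0 : ℝ), ∀ k n, nk (k + 1) ≤ n → n < nk (k + 2) →
      ε ≤ matEntrySumNorm (matProd A 0 n) /
        (matEntrySumNorm (matProd A 0 (nk k)) * matEntrySumNorm (matProd A (nk k) n)))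
    (H2 : ∀ R : Matrix (Fin d) (Fin d) ℝ,
      (∃ φ : ℕ → ℕ, StrictMono φ ∧
        Tendsto (fun k => (matEntrySumNorm (matProd A (nk (φ k)) (nk (φ k + 1))))⁻¹ •
          matProd A (nk (φ k)) (nk (φ k + 1))) atTop (nhds R)) →
      ¬ ∃ i i' : Fin d, ∃ j j' : Fin d, i ≠ i' ∧ j ≠ j' ∧
        R i j * R i' j' ≠ 0 ∧ R i j' = 0 ∧ R i' j = 0) :
    (∀ v : Fin d → ℝ, (∀ i, 0 < v i) →
      ∃ ε > (0 : ℝ), ∀ n,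
        ε ≤ vecEntrySumNorm (matProd A 0 n *ᵥ v) / matEntrySumNorm (matProd A 0 n)) ∧
    ∃ L : Fin d → ℝ, ∀ c : Fin d → ℝ, (∀ i, 0 ≤ c i) →
      (∃ ε > (0 : ℝ), ∀ n,
        ε ≤ vecEntrySumNorm (matProd A 0 n *ᵥ c) / matEntrySumNorm (matProd A 0 n)) →
      Tendsto (fun n => (vecEntrySumNorm (matProd A 0 n *ᵥ c))⁻¹ • (matProd A 0 n *ᵥ c))
        atTop (nhds L) :=
  normalized_image_converges_of_H1_H2_general A hA hP nk hnk Ps hPs H1 H2
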